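/- Let Φ be a frame with lower bound m_Φ and let Ψ be a Bessel sequence with ‖T_Φ − T_Ψ‖ ≤ μ < √m_Φ/2. Then ‖P_{ker T_Φ} − P_{ker T_Ψ}‖ < 1, and consequently the restriction P_{ker T_Ψ}|_{ker T_Φ} : ker T_Φ → ker T_Ψ is an isomorphism of closed subspaces of ℓ². -/

import Mathlib

open ContinuousLinearMap MeasureTheory
open scoped InnerProductSpace ComplexConjugate

noncomputable section

notation "ℓ²" => lp (fun _ : ℕ => ℂ) 2

variable {H : Type} [NormedAddCommGroup H] [InnerProductSpace ℂ H] [CompleteSpace H]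

/-- `Φ = (φₙ)` is a frame for `H` with lower bound `m` and upper bound `M`. -/
def IsFrame (φ : ℕ → H) (m M : ℝ) : Prop :=
  0 < m ∧ 0 < M ∧ ∀ f : H,
    m * ‖f‖ ^ 2 ≤ ∑' n, ‖(inner ℂ (φ n) f : ℂ)‖ ^ 2 ∧
    ∑' n, ‖(inner ℂ (φ n) f : ℂ)‖ ^ 2 ≤ M * ‖f‖ ^ 2

/-- `Φ = (φₙ)` is a Bessel sequence with bound `M`. -/
def IsBessel (φ : ℕ → H) (M : ℝ) : Prop :=
  0 < M ∧ ∀ f : H, ∑' n, ‖(inner ℂ (φ n) f : ℂ)‖ ^ 2 ≤ M * ‖f‖ ^ 2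

/-- `U` is the analysis operator of the sequence `Φ = (φₙ)`, i.e. `U f = (⟨f, φₙ⟩)ₙ`. -/
def IsAnalysis (φ : ℕ → H) (U : H →L[ℂ] ℓ²) : Prop :=
  ∀ (f : H) (n : ℕ), U f n = (inner ℂ (φ n) f : ℂ)

/-- Orthogonal projection onto a closed submodule, as an endomorphism. -/
def orthProj {E : Type} [NormedAddCommGroup E] [InnerProductSpace ℂ E] [CompleteSpace E]
    (K : Submodule ℂ E) (hK : IsClosed (K : Set E)) : E →L[ℂ] E :=
  haveI := hK.completeSpace_coe
  K.subtypeL.comp (K.orthogonalProjectionOnto)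

/-- Orthogonal projection onto a closed submodule, with values in the submodule. -/
def orthProjTo {E : Type} [NormedAddCommGroup E] [InnerProductSpace ℂ E] [CompleteSpace E]
    (K : Submodule ℂ E) (hK : IsClosed (K : Set E)) : E →L[ℂ] K :=
  haveI := hK.completeSpace_coe
  K.orthogonalProjectionOnto

/-- The gap `δ(X, Y) = ‖(Id - P_Y)|_X‖` from `X` to a closed subspace `Y`. -/
def gap {E : Type} [NormedAddCommGroup E] [InnerProductSpace ℂ E] [CompleteSpace E]
    (X Y : Submodule ℂ E) (hY : IsClosed (Y : Set E)) : ℝ :=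
  ‖(ContinuousLinearMap.id ℂ E - orthProj Y hY).comp X.subtypeL‖

/-! The kernels of the synthesis operators are the orthogonal complements of the ranges
`M = R(U_Φ)`, `N = R(U_Ψ)` of the analysis operators, so
`‖P_{ker T_Φ} - P_{ker T_Ψ}‖ = ‖P_M - P_N‖`.
The frame bound gives `√m ‖f‖ ≤ ‖U_Φ f‖`, hence `(√m - μ) ‖f‖ ≤ ‖U_Ψ f‖`, so both ranges are
closed and each vector of one range lies within relative distance `r = μ / (√m - μ) < 1` of the
other. Splitting `(P_M - P_N) x` into its components in `N` and `Nᗮ` gives `‖P_M - P_N‖ ≤ r`.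
Finally, for projections `P`, `Q` with `‖P - Q‖ < 1`, `Q` maps `R(P)` injectively (as
`x = (P - Q) x` for `x ∈ R(P) ∩ ker Q`) onto `R(Q)`, because `1 - (P - Q)²` is invertible and
`Q (1 - (P - Q)²) = Q P Q`. -/

section Projections

variable {𝕜 E : Type*} [RCLike 𝕜] [NormedAddCommGroup E] [InnerProductSpace 𝕜 E]

theorem Submodule.norm_sub_starProjection_le {K : Submodule 𝕜 E} [K.HasOrthogonalProjection]
    (x : E) {k : E} (hk : k ∈ K) : ‖x - K.starProjection x‖ ≤ ‖x - k‖ := by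
  have : x - K.starProjection x = Kᗮ.starProjection (x - k) := by
    simp [map_sub, K.starProjection_eq_self_iff.mpr hk]
  rw [this]
  exact Kᗮ.norm_starProjection_apply_le _

variable {M N : Submodule 𝕜 E} [M.HasOrthogonalProjection] [N.HasOrthogonalProjection]

theorem norm_one_sub_starProjection_mul_starProjection_le {r : ℝ} (hr : 0 ≤ r)
    (h : ∀ x ∈ M, ‖x - N.starProjection x‖ ≤ r * ‖x‖) :
    ‖(1 - N.starProjection) * M.starProjection‖ ≤ r := by
  refine ContinuousLinearMap.opNorm_le_bound _ hr fun x => ?_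
  calc ‖((1 - N.starProjection) * M.starProjection) x‖
      ≤ r * ‖M.starProjection x‖ := h _ (M.starProjection_apply_mem x)
    _ ≤ r * ‖x‖ := by gcongr; exact M.norm_starProjection_apply_le x

theorem norm_starProjection_sub_starProjection_le [CompleteSpace E] {r : ℝ} (hr : 0 ≤ r)
    (hMN : ∀ x ∈ M, ‖x - N.starProjection x‖ ≤ r * ‖x‖)
    (hNM : ∀ y ∈ N, ‖y - M.starProjection y‖ ≤ r * ‖y‖) :
    ‖M.starProjection - N.starProjection‖ ≤ r := by
  set P := M.starProjection
  set Q := N.starProjection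
  have hP : P * P = P := M.isIdempotentElem_starProjection.eq
  have hQ : Q * Q = Q := N.isIdempotentElem_starProjection.eq
  have hQP : ‖(1 - Q) * P‖ ≤ r := norm_one_sub_starProjection_mul_starProjection_le hr hMN
  -- `Q (1 - P)` is the adjoint of `(1 - P) Q`, so it has the same norm
  have hPQ : ‖Q * (1 - P)‖ ≤ r := by
    have := norm_one_sub_starProjection_mul_starProjection_le hr hNM
    rwa [← norm_star, star_mul, star_sub, star_one, (isSelfAdjoint_starProjection M).star_eq,
      (isSelfAdjoint_starProjection N).star_eq] at this
  refine ContinuousLinearMap.opNorm_le_bound _ hr fun x => ?_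
  -- the `N`- and `Nᗮ`-components of `(P - Q) x` are `-Q (1 - P) x` and `(1 - Q) P x`
  have hN : Q * (P - Q) = -(Q * (1 - P) * (1 - P)) := by
    simp only [mul_sub, sub_mul, mul_one, mul_assoc, hP, hQ]
    abel
  have hNperp : (1 - Q) * (P - Q) = (1 - Q) * P * P := by
    simp only [mul_sub, sub_mul, one_mul, mul_assoc, hP, hQ]
    abel
  have eN : Q ((P - Q) x) = -(Q * (1 - P)) ((1 - P) x) := congr($hN x)
  have eNperp : (1 - Q) ((P - Q) x) = ((1 - Q) * P) (P x) := congr($hNperp x)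
  have hN_le := ((Q * (1 - P)).le_opNorm ((1 - P) x)).trans
    (mul_le_mul_of_nonneg_right hPQ (norm_nonneg _))
  have hNperp_le := (((1 - Q) * P).le_opNorm (P x)).trans
    (mul_le_mul_of_nonneg_right hQP (norm_nonneg _))
  refine (pow_le_pow_iff_left₀ (norm_nonneg _) (by positivity) two_ne_zero).mp ?_
  calc ‖(P - Q) x‖ ^ 2 = ‖(Q * (1 - P)) ((1 - P) x)‖ ^ 2 + ‖((1 - Q) * P) (P x)‖ ^ 2 := by
        rw [N.norm_sq_eq_add_norm_sq_starProjection, N.starProjection_orthogonal', eN, eNperp,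
          norm_neg]
    _ ≤ (r * ‖(1 - P) x‖) ^ 2 + (r * ‖P x‖) ^ 2 := by gcongr
    _ = r ^ 2 * (‖P x‖ ^ 2 + ‖(1 - P) x‖ ^ 2) := by ring
    _ = (r * ‖x‖) ^ 2 := by
        rw [mul_pow, M.norm_sq_eq_add_norm_sq_starProjection x, M.starProjection_orthogonal']

end Projections

theorem IsIdempotentElem.exists_mul_mul_eq_of_norm_sub_lt_one {R : Type*} [NormedRing R]
    [HasSummableGeomSeries R] {p q : R} (hp : IsIdempotentElem p) (hq : IsIdempotentElem q)
    (h : ‖p - q‖ < 1) : ∃ w, q * p * w = q := by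
  have hsq : ‖(p - q) * (p - q)‖ < 1 :=
    (norm_mul_le _ _).trans_lt (mul_lt_one_of_nonneg_of_lt_one_left (norm_nonneg _) h h.le)
  set u := Units.oneSub _ hsq
  have hu : q * ↑u = q * p * q := by
    simp only [u, Units.val_oneSub, mul_sub, sub_mul, mul_one, mul_assoc, hp.eq, hq.eq]
    rw [← mul_assoc q q p, hq.eq]
    abel
  exact ⟨q * ↑u⁻¹, by rw [← mul_assoc, ← hu, mul_assoc, Units.mul_inv, mul_one]⟩

theorem bijective_orthogonalProjectionOnto_comp_subtypeL {𝕜 E : Type*} [RCLike 𝕜]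
    [NormedAddCommGroup E] [InnerProductSpace 𝕜 E] [CompleteSpace E] {X Y : Submodule 𝕜 E}
    [X.HasOrthogonalProjection] [Y.HasOrthogonalProjection]
    (h : ‖X.starProjection - Y.starProjection‖ < 1) :
    Function.Bijective (Y.orthogonalProjectionOnto.comp X.subtypeL) := by
  constructor
  · refine (injective_iff_map_eq_zero _).mpr fun x hx => ?_
    have hQx : Y.starProjection x = 0 := congrArg Subtype.val hx
    have hle : ‖(x : E)‖ ≤ ‖X.starProjection - Y.starProjection‖ * ‖(x : E)‖ := by
      calc ‖(x : E)‖ = ‖(X.starProjection - Y.starProjection) x‖ := by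
            simp [hQx]
        _ ≤ _ := ContinuousLinearMap.le_opNorm _ _
    have : ‖(x : E)‖ = 0 := by nlinarith [norm_nonneg (x : E)]
    exact Subtype.ext (norm_eq_zero.mp this)
  · obtain ⟨w, hw⟩ := X.isIdempotentElem_starProjection.exists_mul_mul_eq_of_norm_sub_lt_one
      Y.isIdempotentElem_starProjection h
    refine fun y => ⟨X.orthogonalProjectionOnto (w y), Subtype.ext ?_⟩
    simpa [Y.starProjection_eq_self_iff.mpr y.2] using congr($hw y)

section Perturbation

variable {𝕜 F G : Type*} [RCLike 𝕜] [NormedAddCommGroup F] [InnerProductSpace 𝕜 F]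
  [NormedAddCommGroup G] [InnerProductSpace 𝕜 G] {U V : F →L[𝕜] G} {a μ : ℝ}

theorem ContinuousLinearMap.hasOrthogonalProjection_range_of_bound [CompleteSpace F]
    (ha : 0 < a) (hU : ∀ f, a * ‖f‖ ≤ ‖U f‖) : U.range.HasOrthogonalProjection := by
  have hanti : AntilipschitzWith ⟨a⁻¹, by positivity⟩ U :=
    U.antilipschitz_of_bound fun f => by
      change ‖f‖ ≤ a⁻¹ * ‖U f‖
      rw [inv_mul_eq_div, le_div_iff₀ ha, mul_comm]
      exact hU f
  have : CompleteSpace U.range :=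
    (hanti.isComplete_range U.uniformContinuous).completeSpace_coe
  infer_instance

theorem sub_mul_norm_le_norm_apply_of_norm_sub_le (hU : ∀ f, a * ‖f‖ ≤ ‖U f‖)
    (hUV : ‖U - V‖ ≤ μ) (f : F) : (a - μ) * ‖f‖ ≤ ‖V f‖ := by
  have := ((U - V).le_opNorm f).trans (mul_le_mul_of_nonneg_right hUV (norm_nonneg f))
  rw [sub_apply] at this
  linarith [hU f, norm_sub_norm_le (U f) (V f)]

theorem norm_sub_starProjection_range_le [V.range.HasOrthogonalProjection]
    (hU : ∀ f, a * ‖f‖ ≤ ‖U f‖) (hUV : ‖U - V‖ ≤ μ) {r : ℝ} (hr : 0 ≤ r) (hμr : μ ≤ r * a) :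
    ∀ x ∈ U.range, ‖x - V.range.starProjection x‖ ≤ r * ‖x‖ := by
  rintro _ ⟨f, rfl⟩
  calc ‖U f - V.range.starProjection (U f)‖ ≤ ‖U f - V f‖ :=
        Submodule.norm_sub_starProjection_le _ ⟨f, rfl⟩
    _ ≤ ‖U - V‖ * ‖f‖ := (U - V).le_opNorm f
    _ ≤ r * a * ‖f‖ := by gcongr; exact hUV.trans hμr
    _ ≤ r * ‖U f‖ := by rw [mul_assoc]; gcongr; exact hU f

theorem norm_starProjection_range_sub_le [CompleteSpace G] [U.range.HasOrthogonalProjection]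
    [V.range.HasOrthogonalProjection] (hU : ∀ f, a * ‖f‖ ≤ ‖U f‖) (hUV : ‖U - V‖ ≤ μ)
    (hμa : μ < a) : ‖U.range.starProjection - V.range.starProjection‖ ≤ μ / (a - μ) := by
  have hμ : 0 ≤ μ := (norm_nonneg _).trans hUV
  have hr : 0 ≤ μ / (a - μ) := div_nonneg hμ (by linarith)
  have hVU : ‖V - U‖ ≤ μ := by rwa [norm_sub_rev]
  refine norm_starProjection_sub_starProjection_le hr
    (norm_sub_starProjection_range_le hU hUV hr ?_)
    (norm_sub_starProjection_range_le (sub_mul_norm_le_norm_apply_of_norm_sub_le hU hUV)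
      hVU hr ?_)
  · rw [div_mul_eq_mul_div, le_div_iff₀ (by linarith)]
    nlinarith
  · rw [div_mul_cancel₀ _ (by linarith)]

end Perturbation

theorem lp.norm_sq_eq_tsum {ι : Type*} {G : ι → Type*} [∀ i, NormedAddCommGroup (G i)]
    (g : lp G 2) : ‖g‖ ^ 2 = ∑' i, ‖g i‖ ^ 2 := by
  simpa [Real.rpow_two] using lp.norm_rpow_eq_tsum (p := 2) (by norm_num) g

theorem IsFrame.sqrt_mul_norm_le {E : Type} [NormedAddCommGroup E] [InnerProductSpace ℂ E]
    {φ : ℕ → E} {m M : ℝ} {U : E →L[ℂ] ℓ²} (hΦ : IsFrame φ m M) (hU : IsAnalysis φ U)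
    (f : E) : √m * ‖f‖ ≤ ‖U f‖ := by
  have hnorm : (√m * ‖f‖) ^ 2 ≤ ‖U f‖ ^ 2 := by
    rw [mul_pow, Real.sq_sqrt hΦ.1.le, lp.norm_sq_eq_tsum]
    simpa only [hU f] using (hΦ.2.2 f).1
  exact (pow_le_pow_iff_left₀ (by positivity) (norm_nonneg _) two_ne_zero).mp hnorm

section OrthProj

variable {E : Type} [NormedAddCommGroup E] [InnerProductSpace ℂ E] [CompleteSpace E]

theorem orthProj_eq_starProjection_of_eq {K L : Submodule ℂ E} (hK : IsClosed (K : Set E))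
    [L.HasOrthogonalProjection] (h : K = L) : orthProj K hK = L.starProjection := by
  subst h
  rfl

theorem orthProj_ker_adjoint {F : Type*} [NormedAddCommGroup F] [InnerProductSpace ℂ F]
    [CompleteSpace F] (U : F →L[ℂ] E) [U.range.HasOrthogonalProjection] :
    orthProj (adjoint U).ker (adjoint U).isClosed_ker = 1 - U.range.starProjection := by
  rw [orthProj_eq_starProjection_of_eq _ U.orthogonal_range.symm,
    Submodule.starProjection_orthogonal']

theorem bijective_orthProjTo_comp_subtypeL {X Y : Submodule ℂ E} (hX : IsClosed (X : Set E))
    (hY : IsClosed (Y : Set E)) (h : ‖orthProj X hX - orthProj Y hY‖ < 1) :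
    Function.Bijective ((orthProjTo Y hY).comp X.subtypeL) :=
  have := hX.completeSpace_coe
  have := hY.completeSpace_coe
  bijective_orthogonalProjectionOnto_comp_subtypeL h

end OrthProj

theorem stmt15_general
    (φ : ℕ → H) (mΦ MΦ μ : ℝ)
    (UΦ UΨ : H →L[ℂ] ℓ²) (TΦ TΨ : ℓ² →L[ℂ] H)
    (hUΦ : IsAnalysis φ UΦ)
    (hTΦ : TΦ = adjoint UΦ) (hTΨ : TΨ = adjoint UΨ)
    (hΦ : IsFrame φ mΦ MΦ)
    (hμ : μ < Real.sqrt mΦ / 2) (hper : ‖TΦ - TΨ‖ ≤ μ) :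
    ‖orthProj (LinearMap.ker (TΦ : ℓ² →ₗ[ℂ] H)) (ContinuousLinearMap.isClosed_ker TΦ) -
        orthProj (LinearMap.ker (TΨ : ℓ² →ₗ[ℂ] H)) (ContinuousLinearMap.isClosed_ker TΨ)‖ < 1 ∧
      Function.Bijective
        ⇑((orthProjTo (LinearMap.ker (TΨ : ℓ² →ₗ[ℂ] H)) (ContinuousLinearMap.isClosed_ker TΨ)).comp
            (LinearMap.ker (TΦ : ℓ² →ₗ[ℂ] H)).subtypeL) := by
  subst hTΦ hTΨ
  suffices hlt : ‖orthProj _ (adjoint UΦ).isClosed_ker - orthProj _ (adjoint UΨ).isClosed_ker‖ < 1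
    from ⟨hlt, bijective_orthProjTo_comp_subtypeL _ _ hlt⟩
  have hUV : ‖UΦ - UΨ‖ ≤ μ := by rwa [← LinearIsometryEquiv.norm_map adjoint, map_sub]
  have hμ0 : 0 ≤ μ := (norm_nonneg _).trans hUV
  have hΦlow := hΦ.sqrt_mul_norm_le hUΦ
  have := UΦ.hasOrthogonalProjection_range_of_bound (Real.sqrt_pos.mpr hΦ.1) hΦlow
  have := UΨ.hasOrthogonalProjection_range_of_bound (by linarith)
    (sub_mul_norm_le_norm_apply_of_norm_sub_le hΦlow hUV)
  rw [orthProj_ker_adjoint, orthProj_ker_adjoint, sub_sub_sub_cancel_left, norm_sub_rev]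
  refine (norm_starProjection_range_sub_le hΦlow hUV (by linarith)).trans_lt ?_
  rw [div_lt_one (by linarith)]
  linarith

theorem stmt15
    (φ ψ : ℕ → H) (mΦ MΦ MΨ μ : ℝ)
    (UΦ UΨ : H →L[ℂ] ℓ²) (TΦ TΨ : ℓ² →L[ℂ] H)
    (hUΦ : IsAnalysis φ UΦ) (hUΨ : IsAnalysis ψ UΨ)
    (hTΦ : TΦ = adjoint UΦ) (hTΨ : TΨ = adjoint UΨ)
    (hΦ : IsFrame φ mΦ MΦ) (hΨ : IsBessel ψ MΨ)
    (hμ : μ < Real.sqrt mΦ / 2) (hper : ‖TΦ - TΨ‖ ≤ μ) :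
    ‖orthProj (LinearMap.ker (TΦ : ℓ² →ₗ[ℂ] H)) (ContinuousLinearMap.isClosed_ker TΦ) -
        orthProj (LinearMap.ker (TΨ : ℓ² →ₗ[ℂ] H)) (ContinuousLinearMap.isClosed_ker TΨ)‖ < 1 ∧
      Function.Bijective
        ⇑((orthProjTo (LinearMap.ker (TΨ : ℓ² →ₗ[ℂ] H)) (ContinuousLinearMap.isClosed_ker TΨ)).comp
            (LinearMap.ker (TΦ : ℓ² →ₗ[ℂ] H)).subtypeL) :=
  stmt15_general φ mΦ MΦ μ UΦ UΨ TΦ TΨ hUΦ hTΦ hTΨ hΦ hμ hper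
end
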